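/- Let q : ℝ×ℝ → ℂ be twice continuously differentiable and satisfy the Gerdjikov–Ivanov equation i q_t + q_{xx} − i q² (q_x)* + (1/2) q³ (q*)² = 0. Then for every spectral parameter k ∈ ℂ the zero-curvature (compatibility) equation ∂_t X − ∂_x T + X T − T X = 0 holds at every point (x,t) ∈ ℝ², where X and T are the 2×2 matrix-valued Lax pair coefficients X = −i k² σ₃ + k Q − (i/2) Q² σ₃ and T = −2 i k⁴ σ₃ + 2 k³ Q − i k² Q² σ₃ − i k Q_x σ₃ + (1/2)(Q_x Q − Q Q_x) + (i/4) Q⁴ σ₃. -/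

import Mathlib

open Matrix Complex ComplexConjugate

noncomputable section

abbrev M2 : Type := Matrix (Fin 2) (Fin 2) ℂ

/-- The Pauli matrix σ₃. -/
def sigma3 : M2 := !![1, 0; 0, -1]

/-- The potential matrix Q = [[0, q],[−q*, 0]]. -/
def Qm (a : ℂ) : M2 := !![0, a; -(conj a), 0]

/-- The x-derivative of q. -/
def qx (q : ℝ × ℝ → ℂ) (x t : ℝ) : ℂ := deriv (fun s => q (s, t)) x

/-- The x-part of the Lax pair: X = −i k² σ₃ + k Q − (i/2) Q² σ₃. -/
def Xmat (q : ℝ × ℝ → ℂ) (k : ℂ) (x t : ℝ) : M2 :=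
  (-Complex.I * k ^ 2) • sigma3 + k • Qm (q (x, t))
    - (Complex.I / 2) • (Qm (q (x, t)) ^ 2 * sigma3)

/-- The t-part of the Lax pair:
T = −2 i k⁴ σ₃ + 2 k³ Q − i k² Q² σ₃ − i k Q_x σ₃ + (1/2)(Q_x Q − Q Q_x) + (i/4) Q⁴ σ₃. -/
def Tmat (q : ℝ × ℝ → ℂ) (k : ℂ) (x t : ℝ) : M2 :=
  (-2 * Complex.I * k ^ 4) • sigma3 + (2 * k ^ 3) • Qm (q (x, t))
    - (Complex.I * k ^ 2) • (Qm (q (x, t)) ^ 2 * sigma3)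
    - (Complex.I * k) • (Qm (qx q x t) * sigma3)
    + (1 / 2 : ℂ) • (Qm (qx q x t) * Qm (q (x, t)) - Qm (q (x, t)) * Qm (qx q x t))
    + (Complex.I / 4) • (Qm (q (x, t)) ^ 4 * sigma3)

lemma X00 (q : ℝ × ℝ → ℂ) (k : ℂ) (x t : ℝ) :
    Xmat q k x t 0 0 = -(Complex.I*k^2) + Complex.I/2*(q (x,t)*conj (q (x,t))) := by
  simp [Xmat, Qm, sigma3, pow_two, Matrix.mul_apply, Fin.sum_univ_two]; try ring
lemma X01 (q : ℝ × ℝ → ℂ) (k : ℂ) (x t : ℝ) :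
    Xmat q k x t 0 1 = k * q (x,t) := by
  simp [Xmat, Qm, sigma3, pow_two, Matrix.mul_apply, Fin.sum_univ_two]; try ring
lemma X10 (q : ℝ × ℝ → ℂ) (k : ℂ) (x t : ℝ) :
    Xmat q k x t 1 0 = -(k * conj (q (x,t))) := by
  simp [Xmat, Qm, sigma3, pow_two, Matrix.mul_apply, Fin.sum_univ_two]; try ring
lemma X11 (q : ℝ × ℝ → ℂ) (k : ℂ) (x t : ℝ) :
    Xmat q k x t 1 1 = Complex.I*k^2 - Complex.I/2*(q (x,t)*conj (q (x,t))) := by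
  simp [Xmat, Qm, sigma3, pow_two, Matrix.mul_apply, Fin.sum_univ_two]; try ring
lemma T00 (q : ℝ × ℝ → ℂ) (k : ℂ) (x t : ℝ) :
    Tmat q k x t 0 0 = -(2*Complex.I*k^4) + Complex.I*k^2*(q (x,t)*conj (q (x,t)))
      + (1/2)*(q (x,t)*conj (qx q x t) - conj (q (x,t))*qx q x t)
      + Complex.I/4*(q (x,t)*conj (q (x,t)))^2 := by
  simp [Tmat, Qm, sigma3, Matrix.mul_apply, Fin.sum_univ_two, pow_succ, Matrix.one_apply]; try ring
lemma T01 (q : ℝ × ℝ → ℂ) (k : ℂ) (x t : ℝ) :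
    Tmat q k x t 0 1 = 2*k^3*q (x,t) + Complex.I*k*qx q x t := by
  simp [Tmat, Qm, sigma3, Matrix.mul_apply, Fin.sum_univ_two, pow_succ, Matrix.one_apply]; try ring
lemma T10 (q : ℝ × ℝ → ℂ) (k : ℂ) (x t : ℝ) :
    Tmat q k x t 1 0 = -(2*k^3*conj (q (x,t))) + Complex.I*k*conj (qx q x t) := by
  simp [Tmat, Qm, sigma3, Matrix.mul_apply, Fin.sum_univ_two, pow_succ, Matrix.one_apply]; try ring
lemma T11 (q : ℝ × ℝ → ℂ) (k : ℂ) (x t : ℝ) :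
    Tmat q k x t 1 1 = 2*Complex.I*k^4 - Complex.I*k^2*(q (x,t)*conj (q (x,t)))
      - (1/2)*(q (x,t)*conj (qx q x t) - conj (q (x,t))*qx q x t)
      - Complex.I/4*(q (x,t)*conj (q (x,t)))^2 := by
  simp [Tmat, Qm, sigma3, Matrix.mul_apply, Fin.sum_univ_two, pow_succ, Matrix.one_apply]; try ring

set_option maxHeartbeats 2000000 in
/-- If q is a C² solution of the Gerdjikov–Ivanov equation
i q_t + q_{xx} − i q² (q_x)* + (1/2) q³ (q*)² = 0, then for every spectral parameter k the
zero-curvature equation ∂_t X − ∂_x T + X T − T X = 0 holds at every point (x,t). -/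
theorem zero_curvature_of_GI (q : ℝ × ℝ → ℂ) (hq : ContDiff ℝ 2 q)
    (hGI : ∀ x t : ℝ,
      Complex.I * deriv (fun s => q (x, s)) t
        + deriv (fun s => deriv (fun s' => q (s', t)) s) x
        - Complex.I * q (x, t) ^ 2 * conj (deriv (fun s => q (s, t)) x)
        + (1 / 2) * q (x, t) ^ 3 * (conj (q (x, t))) ^ 2 = 0) :
    ∀ (k : ℂ) (x t : ℝ),
      (Matrix.of fun i j => deriv (fun s => Xmat q k x s i j) t)
        - (Matrix.of fun i j => deriv (fun s => Tmat q k s t i j) x)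
        + Xmat q k x t * Tmat q k x t - Tmat q k x t * Xmat q k x t = 0 := by
  intro k x t
  have hqd := hq.differentiable (by norm_num)
  have hxtd : DifferentiableAt ℝ (fun s : ℝ => q (x, s)) t :=
    (hqd (x, t)).comp t ((differentiableAt_const x).prodMk differentiableAt_id)
  have hA : HasDerivAt (fun s => q (x, s)) (deriv (fun s => q (x, s)) t) t := hxtd.hasDerivAt
  have hstd : DifferentiableAt ℝ (fun s : ℝ => q (s, t)) x :=
    (hqd (x, t)).comp x (differentiableAt_id.prodMk (differentiableAt_const t))
  have hB : HasDerivAt (fun s => q (s, t)) (qx q x t) x := hstd.hasDerivAt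
  have hc2 : ContDiff ℝ 2 (fun s : ℝ => q (s, t)) := hq.comp (contDiff_id.prodMk contDiff_const)
  have hder : ContDiff ℝ 1 (deriv (fun s : ℝ => q (s, t))) := by
    have h := (contDiff_succ_iff_deriv (n := 1)).mp (by exact_mod_cast hc2)
    exact h.2.2
  have hD : HasDerivAt (fun s => qx q s t) (deriv (fun s => deriv (fun s' => q (s', t)) s) x) x := by
    have h := ((hder.differentiable one_ne_zero) x).hasDerivAt
    exact h
  -- derivative of X entries in t
  have dX00 : deriv (fun s => Xmat q k x s 0 0) t
      = Complex.I/2*(deriv (fun s => q (x, s)) t * conj (q (x,t)) + q (x,t) * conj (deriv (fun s => q (x, s)) t)) := by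
    have e : (fun s => Xmat q k x s 0 0)
        = fun s => -(Complex.I*k^2) + Complex.I/2*(q (x,s)*conj (q (x,s))) := funext fun s => X00 q k x s
    rw [e]
    exact (((hA.mul hA.star).const_mul (Complex.I/2)).const_add _).deriv
  have dX01 : deriv (fun s => Xmat q k x s 0 1) t = k * deriv (fun s => q (x, s)) t := by
    have e : (fun s => Xmat q k x s 0 1) = fun s => k * q (x,s) := funext fun s => X01 q k x s
    rw [e]; exact (hA.const_mul k).deriv
  have dX10 : deriv (fun s => Xmat q k x s 1 0) t = -(k * conj (deriv (fun s => q (x, s)) t)) := by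
    have e : (fun s => Xmat q k x s 1 0) = fun s => -(k * conj (q (x,s))) := funext fun s => X10 q k x s
    rw [e]; exact ((hA.star.const_mul k).neg).deriv
  have dX11 : deriv (fun s => Xmat q k x s 1 1) t
      = -(Complex.I/2*(deriv (fun s => q (x, s)) t * conj (q (x,t)) + q (x,t) * conj (deriv (fun s => q (x, s)) t))) := by
    have e : (fun s => Xmat q k x s 1 1)
        = fun s => Complex.I*k^2 - Complex.I/2*(q (x,s)*conj (q (x,s))) := funext fun s => X11 q k x s
    rw [e]
    exact (((hA.mul hA.star).const_mul (Complex.I/2)).const_sub _).deriv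
  -- derivative of T entries in x
  have dT00 : deriv (fun s => Tmat q k s t 0 0)  x
      = Complex.I*k^2*(qx q x t * conj (q (x,t)) + q (x,t) * conj (qx q x t))
        + ((1/2)*((qx q x t * conj (qx q x t) + q (x,t) * conj (deriv (fun s => deriv (fun s' => q (s', t)) s) x))
            - (conj (qx q x t) * qx q x t + conj (q (x,t)) * deriv (fun s => deriv (fun s' => q (s', t)) s) x))
        + Complex.I/4*((qx q x t * conj (q (x,t)) + q (x,t) * conj (qx q x t)) * (q (x,t)*conj (q (x,t)))
            + (q (x,t)*conj (q (x,t))) * (qx q x t * conj (q (x,t)) + q (x,t) * conj (qx q x t)))) := by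
    have e : (fun s => Tmat q k s t 0 0)
        = fun s => -(2*Complex.I*k^4) + (Complex.I*k^2*(q (s,t)*conj (q (s,t)))
          + ((1/2)*(q (s,t)*conj (qx q s t) - conj (q (s,t))*qx q s t)
          + Complex.I/4*((q (s,t)*conj (q (s,t)))*(q (s,t)*conj (q (s,t)))))) := by
      funext s; rw [T00]; ring
    rw [e]
    have hp := (hB.mul hB.star).mul (hB.mul hB.star)
    exact ((((hB.mul hB.star).const_mul (Complex.I*k^2)).add
      ((((hB.mul hD.star).sub (hB.star.mul hD)).const_mul (1/2)).add
        (hp.const_mul (Complex.I/4)))).const_add _).deriv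
  have dT01 : deriv (fun s => Tmat q k s t 0 1) x
      = 2*k^3*qx q x t + Complex.I*k*deriv (fun s => deriv (fun s' => q (s', t)) s) x := by
    have e : (fun s => Tmat q k s t 0 1) = fun s => 2*k^3*q (s,t) + Complex.I*k*qx q s t :=
      funext fun s => T01 q k s t
    rw [e]; exact ((hB.const_mul (2*k^3)).add (hD.const_mul (Complex.I*k))).deriv
  have dT10 : deriv (fun s => Tmat q k s t 1 0) x
      = -(2*k^3*conj (qx q x t)) + Complex.I*k*conj (deriv (fun s => deriv (fun s' => q (s', t)) s) x) := by
    have e : (fun s => Tmat q k s t 1 0) = fun s => -(2*k^3*conj (q (s,t))) + Complex.I*k*conj (qx q s t) :=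
      funext fun s => T10 q k s t
    rw [e]; exact (((hB.star.const_mul (2*k^3)).neg).add (hD.star.const_mul (Complex.I*k))).deriv
  have dT11 : deriv (fun s => Tmat q k s t 1 1) x
      = -(Complex.I*k^2*(qx q x t * conj (q (x,t)) + q (x,t) * conj (qx q x t))
        + ((1/2)*((qx q x t * conj (qx q x t) + q (x,t) * conj (deriv (fun s => deriv (fun s' => q (s', t)) s) x))
            - (conj (qx q x t) * qx q x t + conj (q (x,t)) * deriv (fun s => deriv (fun s' => q (s', t)) s) x))
        + Complex.I/4*((qx q x t * conj (q (x,t)) + q (x,t) * conj (qx q x t)) * (q (x,t)*conj (q (x,t)))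
            + (q (x,t)*conj (q (x,t))) * (qx q x t * conj (q (x,t)) + q (x,t) * conj (qx q x t))))) := by
    have e : (fun s => Tmat q k s t 1 1)
        = fun s => 2*Complex.I*k^4 - (Complex.I*k^2*(q (s,t)*conj (q (s,t)))
          + ((1/2)*(q (s,t)*conj (qx q s t) - conj (q (s,t))*qx q s t)
          + Complex.I/4*((q (s,t)*conj (q (s,t)))*(q (s,t)*conj (q (s,t)))))) := by
      funext s; rw [T11]; ring
    rw [e]
    have hp := (hB.mul hB.star).mul (hB.mul hB.star)
    exact ((((hB.mul hB.star).const_mul (Complex.I*k^2)).add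
      ((((hB.mul hD.star).sub (hB.star.mul hD)).const_mul (1/2)).add
        (hp.const_mul (Complex.I/4)))).const_sub _).deriv
  -- GI consequences
  have hgi := hGI x t
  have hc : deriv (fun s => q (x, s)) t
      = Complex.I * deriv (fun s => deriv (fun s' => q (s', t)) s) x
        + q (x, t) ^ 2 * conj (deriv (fun s => q (s, t)) x)
        + Complex.I / 2 * q (x, t) ^ 3 * (conj (q (x, t))) ^ 2 := by
    linear_combination (-Complex.I) * hgi
      + (deriv (fun s => q (x, s)) t - q (x, t) ^ 2 * conj (deriv (fun s => q (s, t)) x)) * Complex.I_sq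
  have hcc : conj (deriv (fun s => q (x, s)) t)
      = -(Complex.I * conj (deriv (fun s => deriv (fun s' => q (s', t)) s) x))
        + conj (q (x, t)) ^ 2 * deriv (fun s => q (s, t)) x
        - Complex.I / 2 * conj (q (x, t)) ^ 3 * (q (x, t)) ^ 2 := by
    rw [hc]
    simp only [map_add, _root_.map_mul, map_pow, map_div₀, Complex.conj_I, Complex.conj_conj, map_ofNat, map_neg]
    ring
  ext i j
  fin_cases i <;> fin_cases j <;>
    simp only [Matrix.sub_apply, Matrix.add_apply, Matrix.of_apply, Matrix.mul_apply,
      Fin.sum_univ_two, Matrix.zero_apply, Fin.isValue, Fin.zero_eta, Fin.mk_one] <;>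
    simp only [dX00, dX01, dX10, dX11, dT00, dT01, dT10, dT11] <;>
    simp only [X00, X01, X10, X11, T00, T01, T10, T11] <;>
    simp only [qx] <;>
    (try simp only [hcc]) <;> (try simp only [hc]) <;>
    (ring_nf;
     try simp only [Complex.I_sq, map_ofNat, pow_succ, pow_zero, one_mul, Complex.I_mul_I];
     try ring_nf;
     try simp only [Complex.I_sq, map_ofNat, pow_succ, pow_zero, one_mul, Complex.I_mul_I];
     try ring)
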